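/- Let k be a commutative ring, A a k-algebra, D a k-coalgebra and ψ an entwining map as above, and suppose A is an entwined module over itself: A carries a right D-coaction a ↦ Σ a₍₀₎ ⊗ a₍₁₎ with (ab)₍₀₎ ⊗ (ab)₍₁₎ = Σ a₍₀₎ b_ψ ⊗ a₍₁₎^ψ. If λ : D → A is a right D-colinear map with convolution inverse λ̄, then for all d ∈ D: Σ λ̄(d) 1₍₀₎ ⊗ 1₍₁₎ = Σ λ̄(d₍₂₎)_ψ ⊗ d₍₁₎^ψ, where 1₍₀₎ ⊗ 1₍₁₎ denotes the coaction on 1_A. -/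

import Mathlib

open TensorProduct

noncomputable section

variable {k A D : Type*} [CommRing k] [Ring A] [Algebra k A]
  [AddCommGroup D] [Module k D] [Coalgebra k D]

/-- `ψ : D ⊗ A → A ⊗ D` is an entwining map. -/
def IsEntwining (ψ : D ⊗[k] A →ₗ[k] A ⊗[k] D) : Prop :=
  -- `ψ (d ⊗ ab) = ∑ a_ψ b_φ ⊗ d^{ψφ}`
  (ψ ∘ₗ (LinearMap.mul' k A).lTensor D =
    (LinearMap.mul' k A).rTensor D ∘ₗ (TensorProduct.assoc k A A D).symm.toLinearMap ∘ₗ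
      ψ.lTensor A ∘ₗ (TensorProduct.assoc k A D A).toLinearMap ∘ₗ
        ψ.rTensor A ∘ₗ (TensorProduct.assoc k D A A).symm.toLinearMap) ∧
  -- `ψ (d ⊗ 1) = 1 ⊗ d`
  (∀ d : D, ψ (d ⊗ₜ[k] (1 : A)) = (1 : A) ⊗ₜ[k] d) ∧
  -- `∑ a_ψ ⊗ Δ (d^ψ) = ∑ a_{ψφ} ⊗ d₍₁₎^φ ⊗ d₍₂₎^ψ`
  ((Coalgebra.comul (R := k) (A := D)).lTensor A ∘ₗ ψ =
    (TensorProduct.assoc k A D D).toLinearMap ∘ₗ ψ.rTensor D ∘ₗ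
      (TensorProduct.assoc k D A D).symm.toLinearMap ∘ₗ ψ.lTensor D ∘ₗ
        (TensorProduct.assoc k D D A).toLinearMap ∘ₗ
          (Coalgebra.comul (R := k) (A := D)).rTensor A) ∧
  -- `∑ a_ψ ε(d^ψ) = ε(d) a`
  ((TensorProduct.rid k A).toLinearMap ∘ₗ
      (Coalgebra.counit (R := k) (A := D)).lTensor A ∘ₗ ψ =
    (TensorProduct.lid k A).toLinearMap ∘ₗ (Coalgebra.counit (R := k) (A := D)).rTensor A)

/-- The right `A`-action on `A ⊗ D` induced by an entwining map:
`(a ⊗ d) · a' = ∑ a a'_ψ ⊗ d^ψ`. -/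
def rmap (ψ : D ⊗[k] A →ₗ[k] A ⊗[k] D) : (A ⊗[k] D) ⊗[k] A →ₗ[k] A ⊗[k] D :=
  (LinearMap.mul' k A).rTensor D ∘ₗ (TensorProduct.assoc k A A D).symm.toLinearMap ∘ₗ
    ψ.lTensor A ∘ₗ (TensorProduct.assoc k A D A).toLinearMap

/-- The coproduct `A ⊗ Δ` of the coring `A ⊗ D` (in the model
`(A ⊗ D) ⊗_A (A ⊗ D) ≅ (A ⊗ D) ⊗ D`). -/
def corComul : A ⊗[k] D →ₗ[k] (A ⊗[k] D) ⊗[k] D :=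
  (TensorProduct.assoc k A D D).symm.toLinearMap ∘ₗ
    (Coalgebra.comul (R := k) (A := D)).lTensor A

/-- The counit `A ⊗ ε` of the coring `A ⊗ D`. -/
def corCounit : A ⊗[k] D →ₗ[k] A :=
  (TensorProduct.rid k A).toLinearMap ∘ₗ (Coalgebra.counit (R := k) (A := D)).lTensor A

/-- The right `A`-action on `(A ⊗ D) ⊗ D ≅ (A ⊗ D) ⊗_A (A ⊗ D)`. -/
def rmap2 (ψ : D ⊗[k] A →ₗ[k] A ⊗[k] D) :
    ((A ⊗[k] D) ⊗[k] D) ⊗[k] A →ₗ[k] (A ⊗[k] D) ⊗[k] D :=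
  (rmap ψ).rTensor D ∘ₗ (TensorProduct.assoc k (A ⊗[k] D) A D).symm.toLinearMap ∘ₗ
    ψ.lTensor (A ⊗[k] D) ∘ₗ (TensorProduct.assoc k (A ⊗[k] D) D A).toLinearMap

/-- Convolution of two linear maps `D → A`. -/
def convDA (f g : D →ₗ[k] A) : D →ₗ[k] A :=
  LinearMap.mul' k A ∘ₗ TensorProduct.map f g ∘ₗ Coalgebra.comul

/-! Let `D →ₗ A` act on `D →ₗ A ⊗ D` by convolution. Since `λ` is colinear and `A` is entwined,
`λ ⋆ (ψ ∘ (D ⊗ λ̄) ∘ Δ) = ρ ∘ (λ * λ̄) = ρ ∘ η ∘ ε`; acting on both sides with `λ̄` and using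
`λ̄ * λ = η ∘ ε` gives `ψ ∘ (D ⊗ λ̄) ∘ Δ = λ̄ ⋆ (ρ ∘ η ∘ ε)`, which at `d` is `λ̄(d) · ρ(1)`. -/

lemma rTensor_mul'_assoc_symm_tmul {R B M : Type*} [CommSemiring R] [Semiring B] [Algebra R B]
    [AddCommMonoid M] [Module R M] (a : B) (x : B ⊗[R] M) :
    (LinearMap.mul' R B).rTensor M ((TensorProduct.assoc R B B M).symm (a ⊗ₜ x)) =
      (LinearMap.mulLeft R a).rTensor M x := by
  induction x using TensorProduct.induction_on with
  | zero => simp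
  | tmul b e => simp
  | add x y hx hy => simp [tmul_add, hx, hy]

/-- `(f ⋆ g)(d) = ∑ f(d₍₁₎) • g(d₍₂₎)`, where `A` acts on `A ⊗ D` by left multiplication on the
first factor; this makes `D →ₗ A ⊗ D` a left module over the convolution algebra `D →ₗ A`. -/
def convAct (f : D →ₗ[k] A) (g : D →ₗ[k] A ⊗[k] D) : D →ₗ[k] A ⊗[k] D :=
  (LinearMap.mul' k A).rTensor D ∘ₗ (TensorProduct.assoc k A A D).symm.toLinearMap ∘ₗ
    TensorProduct.map f g ∘ₗ Coalgebra.comul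

lemma unit_convAct (g : D →ₗ[k] A ⊗[k] D) :
    convAct (Algebra.linearMap k A ∘ₗ Coalgebra.counit) g = g := by
  ext d
  simp only [convAct, LinearMap.comp_apply, ← LinearMap.map_rTensor,
    Coalgebra.rTensor_counit_comul, TensorProduct.map_tmul, Algebra.linearMap_apply, map_one,
    LinearEquiv.coe_coe, rTensor_mul'_assoc_symm_tmul, LinearMap.mulLeft_one,
    LinearMap.rTensor_id_apply]

lemma convAct_comp_unit_apply (f : D →ₗ[k] A) (ρ : A →ₗ[k] A ⊗[k] D) (d : D) :
    convAct f (ρ ∘ₗ Algebra.linearMap k A ∘ₗ Coalgebra.counit) d =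
      (LinearMap.mulLeft k (f d)).rTensor D (ρ 1) := by
  have hsplit : TensorProduct.map f (ρ ∘ₗ Algebra.linearMap k A ∘ₗ Coalgebra.counit) =
      TensorProduct.map f (ρ ∘ₗ Algebra.linearMap k A) ∘ₗ
        (Coalgebra.counit (R := k) (A := D)).lTensor D := by
    ext; simp
  simp only [convAct, LinearMap.comp_apply, hsplit, Coalgebra.lTensor_counit_comul,
    TensorProduct.map_tmul, Algebra.linearMap_apply, map_one, LinearEquiv.coe_coe,
    rTensor_mul'_assoc_symm_tmul]

lemma convAct_convAct (h f : D →ₗ[k] A) (g : D →ₗ[k] A ⊗[k] D) :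
    convAct h (convAct f g) = convAct (convDA h f) g := by
  have hleft : TensorProduct.map h (convAct f g) =
      TensorProduct.map h ((LinearMap.mul' k A).rTensor D ∘ₗ
        (TensorProduct.assoc k A A D).symm.toLinearMap ∘ₗ TensorProduct.map f g) ∘ₗ
      (Coalgebra.comul (R := k) (A := D)).lTensor D := by
    ext; simp [convAct]
  have hright : TensorProduct.map (convDA h f) g =
      TensorProduct.map (LinearMap.mul' k A ∘ₗ TensorProduct.map h f) g ∘ₗ
      (Coalgebra.comul (R := k) (A := D)).rTensor D := by
    ext; simp [convDA]
  have key : (LinearMap.mul' k A).rTensor D ∘ₗ (TensorProduct.assoc k A A D).symm.toLinearMap ∘ₗ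
        TensorProduct.map h ((LinearMap.mul' k A).rTensor D ∘ₗ
          (TensorProduct.assoc k A A D).symm.toLinearMap ∘ₗ TensorProduct.map f g) ∘ₗ
        (TensorProduct.assoc k D D D).toLinearMap =
      (LinearMap.mul' k A).rTensor D ∘ₗ (TensorProduct.assoc k A A D).symm.toLinearMap ∘ₗ
        TensorProduct.map (LinearMap.mul' k A ∘ₗ TensorProduct.map h f) g := by
    ext d₁ d₂ d₃
    simp [rTensor_mul'_assoc_symm_tmul, ← LinearMap.rTensor_comp_apply, LinearMap.mulLeft_mul]
  ext d
  rw [convAct, hleft]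
  simp only [convAct, hright, LinearMap.comp_apply]
  simpa only [LinearMap.comp_apply, LinearEquiv.coe_coe, Coalgebra.coassoc_apply] using
    congr($key ((Coalgebra.comul (R := k) (A := D)).rTensor D (Coalgebra.comul d)))

lemma convAct_comp_lTensor_comul (ψ : D ⊗[k] A →ₗ[k] A ⊗[k] D) (f g : D →ₗ[k] A) :
    convAct f (ψ ∘ₗ g.lTensor D ∘ₗ Coalgebra.comul) =
      rmap ψ ∘ₗ TensorProduct.map (f.rTensor D ∘ₗ Coalgebra.comul) g ∘ₗ Coalgebra.comul := by
  have hleft : TensorProduct.map f (ψ ∘ₗ g.lTensor D ∘ₗ Coalgebra.comul) =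
      TensorProduct.map f (ψ ∘ₗ g.lTensor D) ∘ₗ (Coalgebra.comul (R := k) (A := D)).lTensor D := by
    ext; simp
  have hright : TensorProduct.map (f.rTensor D ∘ₗ Coalgebra.comul) g =
      TensorProduct.map (f.rTensor D) g ∘ₗ (Coalgebra.comul (R := k) (A := D)).rTensor D := by
    ext; simp
  have key : (LinearMap.mul' k A).rTensor D ∘ₗ (TensorProduct.assoc k A A D).symm.toLinearMap ∘ₗ
        TensorProduct.map f (ψ ∘ₗ g.lTensor D) ∘ₗ (TensorProduct.assoc k D D D).toLinearMap =
      rmap ψ ∘ₗ TensorProduct.map (f.rTensor D) g := by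
    ext; simp [rmap]
  ext d
  rw [convAct, hleft, hright]
  simpa only [LinearMap.comp_apply, LinearEquiv.coe_coe, Coalgebra.coassoc_apply] using
    congr($key ((Coalgebra.comul (R := k) (A := D)).rTensor D (Coalgebra.comul d)))

lemma comp_convDA_of_entwined (ψ : D ⊗[k] A →ₗ[k] A ⊗[k] D) (ρ : A →ₗ[k] A ⊗[k] D)
    (hentwined : ∀ a b : A, ρ (a * b) = rmap ψ ((ρ a) ⊗ₜ[k] b)) (f g : D →ₗ[k] A) :
    ρ ∘ₗ convDA f g = rmap ψ ∘ₗ TensorProduct.map (ρ ∘ₗ f) g ∘ₗ Coalgebra.comul := by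
  have hmul : ρ ∘ₗ LinearMap.mul' k A = rmap ψ ∘ₗ ρ.rTensor A := by
    ext a b
    exact hentwined a b
  rw [convDA, ← LinearMap.comp_assoc, hmul, LinearMap.comp_assoc,
    ← LinearMap.comp_assoc _ _ (ρ.rTensor A), LinearMap.rTensor_comp_map]

theorem stmt_16_general (ψ : D ⊗[k] A →ₗ[k] A ⊗[k] D)
    (ρ : A →ₗ[k] A ⊗[k] D)
    -- … satisfying `ρ(ab) = ∑ a₍₀₎ b_ψ ⊗ a₍₁₎^ψ`
    (hentwined : ∀ a b : A, ρ (a * b) = rmap ψ ((ρ a) ⊗ₜ[k] b))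
    -- `λ : D → A` is right `D`-colinear with convolution inverse `λ̄`
    (lam lamBar : D →ₗ[k] A)
    (hcolin : ρ ∘ₗ lam = lam.rTensor D ∘ₗ Coalgebra.comul)
    (hinv₁ : convDA lam lamBar = Algebra.linearMap k A ∘ₗ Coalgebra.counit)
    (hinv₂ : convDA lamBar lam = Algebra.linearMap k A ∘ₗ Coalgebra.counit) :
    -- `∑ λ̄(d) 1₍₀₎ ⊗ 1₍₁₎ = ∑ λ̄(d₍₂₎)_ψ ⊗ d₍₁₎^ψ` for all `d`
    ∀ d : D,
      (LinearMap.mulLeft k (lamBar d)).rTensor D (ρ 1) =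
        ψ ((lamBar.lTensor D) (Coalgebra.comul d)) := by
  have hlam : convAct lam (ψ ∘ₗ lamBar.lTensor D ∘ₗ Coalgebra.comul) =
      ρ ∘ₗ Algebra.linearMap k A ∘ₗ Coalgebra.counit := by
    rw [convAct_comp_lTensor_comul, ← hcolin, ← comp_convDA_of_entwined ψ ρ hentwined, hinv₁]
  have hlamBar : ψ ∘ₗ lamBar.lTensor D ∘ₗ Coalgebra.comul =
      convAct lamBar (ρ ∘ₗ Algebra.linearMap k A ∘ₗ Coalgebra.counit) := by
    rw [← hlam, convAct_convAct, hinv₂, unit_convAct]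
  intro d
  rw [← convAct_comp_unit_apply, ← hlamBar]
  rfl

theorem stmt_16 (ψ : D ⊗[k] A →ₗ[k] A ⊗[k] D) (hψ : IsEntwining ψ)
    (ρ : A →ₗ[k] A ⊗[k] D)
    -- `A` is an entwined module over itself: `ρ` is a counital coassociative coaction …
    (hcoassoc : ∀ a : A,
      (TensorProduct.assoc k A D D) (ρ.rTensor D (ρ a)) =
        (Coalgebra.comul (R := k) (A := D)).lTensor A (ρ a))
    (hcounit : ∀ a : A,
      (TensorProduct.rid k A) ((Coalgebra.counit (R := k) (A := D)).lTensor A (ρ a)) = a)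
    -- … satisfying `ρ(ab) = ∑ a₍₀₎ b_ψ ⊗ a₍₁₎^ψ`
    (hentwined : ∀ a b : A, ρ (a * b) = rmap ψ ((ρ a) ⊗ₜ[k] b))
    -- `λ : D → A` is right `D`-colinear with convolution inverse `λ̄`
    (lam lamBar : D →ₗ[k] A)
    (hcolin : ρ ∘ₗ lam = lam.rTensor D ∘ₗ Coalgebra.comul)
    (hinv₁ : convDA lam lamBar = Algebra.linearMap k A ∘ₗ Coalgebra.counit)
    (hinv₂ : convDA lamBar lam = Algebra.linearMap k A ∘ₗ Coalgebra.counit) :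
    -- `∑ λ̄(d) 1₍₀₎ ⊗ 1₍₁₎ = ∑ λ̄(d₍₂₎)_ψ ⊗ d₍₁₎^ψ` for all `d`
    ∀ d : D,
      (LinearMap.mulLeft k (lamBar d)).rTensor D (ρ 1) =
        ψ ((lamBar.lTensor D) (Coalgebra.comul d)) :=
  stmt_16_general ψ ρ hentwined lam lamBar hcolin hinv₁ hinv₂
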